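/- arXiv:math/0212144 — 12 statements merged into one kernel-verified Lean document; each statement's English description precedes it below -/
import Mathlib

section
/- The determinant of the n×n symmetric Pascal matrix P(n) with entries p_{i,j} = C(i+j, i) for 0 ≤ i,j < n equals 1. -/
open Finset Matrix

lemma pascal_aux (i j n : ℕ) (hj : j < n) :
    ∑ k ∈ Finset.range n, i.choose k * j.choose k = (i + j).choose i := by
  rw [Nat.choose_symm_add, Nat.add_choose_eq i j j,
    Finset.Nat.sum_antidiagonal_eq_sum_range_succ_mk]
  rw [show ∑ k ∈ range (j + 1), i.choose k * j.choose (j - k)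
        = ∑ k ∈ range (j + 1), i.choose k * j.choose k from
    Finset.sum_congr rfl fun k hk => by
      rw [Nat.choose_symm (Nat.lt_succ_iff.mp (Finset.mem_range.mp hk))]]
  refine (Finset.sum_subset (Finset.range_subset_range.mpr hj) (fun k _ hk => ?_)).symm
  have hjk : j < k := Nat.lt_of_succ_le (Nat.le_of_not_lt fun h => hk (Finset.mem_range.mpr h))
  rw [Nat.choose_eq_zero_of_lt hjk, mul_zero]

/-- The determinant of the `n × n` symmetric Pascal matrix with entries
`(i+j).choose i` equals `1`. -/
theorem det_symm_pascal (n : ℕ) :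
    (Matrix.of fun i j : Fin n => ((Nat.choose (i + j) i : ℤ))).det = 1 := by
  set L : Matrix (Fin n) (Fin n) ℤ := Matrix.of fun i j => ((i : ℕ).choose j : ℤ) with hL
  have hfact : (Matrix.of fun i j : Fin n => ((Nat.choose (i + j) i : ℤ))) = L * Lᵀ := by
    ext i j
    simp only [Matrix.mul_apply, Matrix.transpose_apply, hL, Matrix.of_apply]
    have h : ∑ k : Fin n, (i : ℕ).choose k * (j : ℕ).choose k = ((i : ℕ) + j).choose i := by
      rw [Fin.sum_univ_eq_sum_range fun k => (i : ℕ).choose k * (j : ℕ).choose k]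
      exact pascal_aux _ _ _ j.isLt
    exact_mod_cast h.symm
  have hLtri : L.BlockTriangular OrderDual.toDual := fun i j hij => by
    simp only [hL, Matrix.of_apply]
    exact_mod_cast Nat.choose_eq_zero_of_lt (show (i : ℕ) < j from hij)
  have hLdet : L.det = 1 := by
    rw [Matrix.det_of_lowerTriangular L hLtri]
    simp [hL]
  rw [hfact, Matrix.det_mul, Matrix.det_transpose, hLdet, mul_one]
end

section
/- The symmetric Pascal matrix P(n) is positive definite for every n. -/
/-! The symmetric Pascal matrix factors as `L * Lᵀ`, where `L i k = choose i k` is the lower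
triangular Pascal matrix: the factorization is Vandermonde's identity
`choose (i + j) i = ∑ₖ choose i k * choose j k`. Since `L` is unitriangular it is invertible,
so `xᵀ (L * Lᵀ) x = ‖Lᵀ x‖²` vanishes only at `x = 0`. -/

open Finset

theorem Nat.add_choose_left_eq_sum_choose_mul_choose (i j : ℕ) :
    (i + j).choose i = ∑ k ∈ range (i + 1), i.choose k * j.choose k := by
  rw [Nat.add_choose_eq, ← Nat.sum_antidiagonal_swap, Nat.sum_antidiagonal_eq_sum_range_succ_mk]
  refine sum_congr rfl fun k hk => ?_
  rw [Prod.swap_prod_mk, Nat.choose_symm (Nat.lt_succ_iff.mp (mem_range.mp hk))]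

namespace Matrix

variable (n : ℕ) (R : Type*)

def pascalLower [NatCast R] : Matrix (Fin n) (Fin n) R :=
  of fun i k => ((i : ℕ).choose k : R)

def pascalSymm [NatCast R] : Matrix (Fin n) (Fin n) R :=
  of fun i j => (((i : ℕ) + j).choose i : R)

theorem pascalSymm_eq_mul_transpose [CommSemiring R] :
    pascalSymm n R = pascalLower n R * (pascalLower n R)ᵀ := by
  ext i j
  have hvanish : ∀ k ∈ range n, k ∉ range (i + 1) →
      (((i : ℕ).choose k * (j : ℕ).choose k : ℕ) : R) = 0 := fun k _ hk => by
    rw [Nat.choose_eq_zero_of_lt (by simpa using hk), zero_mul, Nat.cast_zero]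
  simp only [pascalSymm, pascalLower, mul_apply, transpose_apply, of_apply]
  rw [Fin.sum_univ_eq_sum_range (fun k => ((i : ℕ).choose k : R) * ((j : ℕ).choose k : R)),
    Nat.add_choose_left_eq_sum_choose_mul_choose, Nat.cast_sum,
    sum_subset (range_subset_range.2 i.isLt) hvanish]
  push_cast
  rfl

theorem pascalLower_isLowerTriangular [AddMonoidWithOne R] :
    (pascalLower n R).IsLowerTriangular := fun i k hik => by
  simp [pascalLower, Nat.choose_eq_zero_of_lt (show (i : ℕ) < k from hik)]

theorem det_pascalLower [CommRing R] : (pascalLower n R).det = 1 := by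
  rw [det_of_isLowerTriangular _ (pascalLower_isLowerTriangular n R)]
  simp [pascalLower]

theorem posDef_pascalSymm [CommRing R] [PartialOrder R] [StarRing R] [TrivialStar R]
    [StarOrderedRing R] [NoZeroDivisors R] : (pascalSymm n R).PosDef := by
  have hL : IsUnit (pascalLower n R) := (isUnit_iff_isUnit_det _).2 (by simp [det_pascalLower])
  simpa [pascalSymm_eq_mul_transpose, conjTranspose_eq_transpose_of_trivial] using
    PosDef.mul_conjTranspose_self _ (vecMul_injective_of_isUnit hL)

end Matrix

/-- The symmetric Pascal matrix is positive definite over `ℝ`. -/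
theorem symm_pascal_posDef (n : ℕ) :
    (Matrix.of fun i j : Fin n => ((Nat.choose (i + j) i : ℝ))).PosDef :=
  Matrix.posDef_pascalSymm n ℝ
end

section
/- The characteristic polynomial χ_n(t) = det(t·I − P(n)) of the symmetric Pascal matrix satisfies the functional equation χ_n(t) = (−t)^n · χ_n(1/t) (as an identity of rational functions, equivalently the coefficient sequence satisfies a_k = (−1)^n a_{n−k} up to sign conventions). -/
/-!
Write `P = L Lᵀ` with `L` the lower triangular Pascal matrix `(C(i, j))`, so `det P = 1`.
With `D = diag((-1)^i)`, the matrix `L D` is an involution (this is `C(i, j)` inverting to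
`(-1)^(i+j) C(i, j)`), hence `P⁻¹ = D (Lᵀ L) D`. So `P⁻¹` has the characteristic polynomial of
`Lᵀ L`, which is that of `L Lᵀ = P`. For a matrix of determinant one, `χ(P⁻¹)` is `(-1)^n` times
the reverse of `χ(P)`, whence `χ(P)` is self-reciprocal up to the sign `(-1)^n`.
-/

open Finset Polynomial

theorem Fin.sum_univ_eq_sum_range_of_eq_zero {M : Type*} [AddCommMonoid M] {n i : ℕ}
    (hi : i < n) (f : ℕ → M) (hf : ∀ k, i < k → f k = 0) :
    ∑ k : Fin n, f k = ∑ k ∈ range (i + 1), f k := by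
  rw [Fin.sum_univ_eq_sum_range]
  refine (sum_subset (range_subset_range.2 hi) fun k _ hk ↦ hf k ?_).symm
  simpa using hk

theorem Nat.sum_range_choose_mul_choose (i j : ℕ) :
    ∑ k ∈ range (j + 1), i.choose k * j.choose k = (i + j).choose i := by
  rw [choose_symm_add, add_choose_eq, Finset.Nat.sum_antidiagonal_eq_sum_range_succ_mk]
  refine sum_congr rfl fun k hk ↦ ?_
  rw [choose_symm (mem_range_succ_iff.1 hk)]

/-- Compare the coefficients of `X ^ j` in `(-X) ^ i = (1 - (X + 1)) ^ i`. -/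
theorem sum_range_choose_mul_neg_one_pow_mul_choose (R : Type*) [CommRing R] (i j : ℕ) :
    ∑ k ∈ range (i + 1), (i.choose k : R) * (-1) ^ k * k.choose j =
      if i = j then (-1) ^ i else 0 := by
  calc ∑ k ∈ range (i + 1), (i.choose k : R) * (-1) ^ k * k.choose j
      = ∑ k ∈ range (i + 1), ((-((X : R[X]) + 1)) ^ k * 1 ^ (i - k) * i.choose k).coeff j := by
        refine sum_congr rfl fun k _ ↦ ?_
        rw [one_pow, mul_one, coeff_mul_natCast, neg_pow (X + 1 : R[X]),
          show (-1 : R[X]) ^ k = C ((-1) ^ k) by simp, coeff_C_mul, coeff_X_add_one_pow]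
        ring
    _ = ((-((X : R[X]) + 1) + 1) ^ i).coeff j := by rw [add_pow, finsetSum_coeff]
    _ = if i = j then (-1) ^ i else 0 := by
        rw [show -((X : R[X]) + 1) + 1 = C (-1) * X by simp, mul_pow, ← C_pow, coeff_C_mul_X_pow]
        exact if_congr eq_comm rfl rfl

namespace Matrix

section Reciprocal

variable {n : Type*} [Fintype n] [DecidableEq n] {R : Type*} [CommRing R]

theorem charpoly_inv_mul_transpose {L D : Matrix n n R} (hD : D * D = 1) (hDt : Dᵀ = D)
    (hL : L * D * L = D) : (L * Lᵀ)⁻¹.charpoly = (L * Lᵀ).charpoly := by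
  have hinv : (L * Lᵀ)⁻¹ = D * (Lᵀ * L) * D := by
    refine inv_eq_left_inv ?_
    calc D * (Lᵀ * L) * D * (L * Lᵀ) = D * (Lᵀ * (L * D * L) * Lᵀ) := by
          simp only [Matrix.mul_assoc]
      _ = D * (L * D * L)ᵀ := by
          rw [transpose_mul, transpose_mul, hDt, hL, Matrix.mul_assoc]
      _ = 1 := by rw [hL, hDt, hD]
  rw [hinv, Matrix.mul_assoc, charpoly_mul_comm, Matrix.mul_assoc, hD, Matrix.mul_one,
    charpoly_mul_comm]

theorem charpoly_eq_neg_one_pow_mul_charpolyRev {M : Matrix n n R} (hdet : M.det = 1)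
    (h : M⁻¹.charpoly = M.charpoly) : M.charpoly = (-1) ^ Fintype.card n * M.charpolyRev := by
  have hM : IsUnit M := (isUnit_iff_isUnit_det M).2 (hdet ▸ isUnit_one)
  rw [← h, charpoly_inv M hM, hdet, Ring.inverse_one, map_one, mul_one]

theorem coeff_charpolyRev [Nontrivial R] (M : Matrix n n R) {k : ℕ} (hk : k ≤ Fintype.card n) :
    M.charpolyRev.coeff k = M.charpoly.coeff (Fintype.card n - k) := by
  rw [← reverse_charpoly, coeff_reverse, charpoly_natDegree_eq_dim, revAt_le hk]

theorem coeff_charpoly_eq_neg_one_pow_mul_coeff [Nontrivial R] {M : Matrix n n R}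
    (hdet : M.det = 1) (h : M⁻¹.charpoly = M.charpoly) {k : ℕ} (hk : k ≤ Fintype.card n) :
    M.charpoly.coeff k = (-1) ^ Fintype.card n * M.charpoly.coeff (Fintype.card n - k) := by
  rw [← coeff_charpolyRev M hk, ← coeff_C_mul, C_pow, C_neg, C_1,
    ← charpoly_eq_neg_one_pow_mul_charpolyRev hdet h]

end Reciprocal

section Pascal

variable (R : Type*) (n : ℕ)

def lowerPascal [NatCast R] : Matrix (Fin n) (Fin n) R :=
  of fun i j => ((i : ℕ).choose j : R)

theorem lowerPascal_mul_transpose [Semiring R] :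
    lowerPascal R n * (lowerPascal R n)ᵀ = of fun i j : Fin n => ((Nat.choose (i + j) i : R)) := by
  ext i j
  simp only [mul_apply, lowerPascal, of_apply, transpose_apply]
  rw [Fin.sum_univ_eq_sum_range_of_eq_zero j.isLt
    (fun k ↦ ((i : ℕ).choose k * (j : ℕ).choose k : R))
    fun k hk ↦ by simp [Nat.choose_eq_zero_of_lt hk]]
  exact_mod_cast congrArg (Nat.cast : ℕ → R) (Nat.sum_range_choose_mul_choose i j)

theorem lowerPascal_mul_diagonal_mul [CommRing R] :
    lowerPascal R n * diagonal (fun i : Fin n ↦ (-1 : R) ^ (i : ℕ)) * lowerPascal R n =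
      diagonal fun i : Fin n ↦ (-1 : R) ^ (i : ℕ) := by
  ext i j
  simp only [mul_apply (M := _ * _), mul_diagonal, lowerPascal, of_apply, diagonal_apply]
  rw [Fin.sum_univ_eq_sum_range_of_eq_zero i.isLt
    (fun k ↦ ((i : ℕ).choose k * (-1) ^ k * k.choose j : R))
    fun k hk ↦ by simp [Nat.choose_eq_zero_of_lt hk], sum_range_choose_mul_neg_one_pow_mul_choose]
  simp only [Fin.val_inj]

theorem det_lowerPascal [CommRing R] : (lowerPascal R n).det = 1 := by
  rw [det_of_isLowerTriangular _ fun i j hij ↦ by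
    simp [lowerPascal, Nat.choose_eq_zero_of_lt (Fin.lt_def.1 (OrderDual.toDual_lt_toDual.1 hij))]]
  simp [lowerPascal]

theorem det_lowerPascal_mul_transpose [CommRing R] :
    (lowerPascal R n * (lowerPascal R n)ᵀ).det = 1 := by
  rw [det_mul, det_transpose, det_lowerPascal, one_mul]

theorem charpoly_inv_lowerPascal_mul_transpose [CommRing R] :
    (lowerPascal R n * (lowerPascal R n)ᵀ)⁻¹.charpoly =
      (lowerPascal R n * (lowerPascal R n)ᵀ).charpoly :=
  charpoly_inv_mul_transpose (by simp [diagonal_mul_diagonal, ← mul_pow]) (diagonal_transpose _)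
    (lowerPascal_mul_diagonal_mul R n)

end Pascal

end Matrix

/-- The characteristic polynomial `χ_n` of the symmetric Pascal matrix satisfies
`χ_n(t) = (-t)^n χ_n(1/t)`, i.e. its coefficients satisfy
`a_k = (-1)^n a_{n-k}` for `0 ≤ k ≤ n`. -/
theorem symm_pascal_charpoly_selfReciprocal (n : ℕ) (k : ℕ) (hk : k ≤ n) :
    (Matrix.of fun i j : Fin n => ((Nat.choose (i + j) i : ℚ))).charpoly.coeff k =
      (-1 : ℚ) ^ n *
        (Matrix.of fun i j : Fin n => ((Nat.choose (i + j) i : ℚ))).charpoly.coeff (n - k) := by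
  rw [← Matrix.lowerPascal_mul_transpose]
  simpa using Matrix.coeff_charpoly_eq_neg_one_pow_mul_coeff
    (Matrix.det_lowerPascal_mul_transpose ℚ n) (Matrix.charpoly_inv_lowerPascal_mul_transpose ℚ n)
    (k := k) (by simpa using hk)
end

section
/- The symmetric Pascal matrix P(n) is conjugate to its inverse P(n)^{-1} over the rationals. -/
/-!
By Vandermonde's identity `P = S * Sᵀ` for the signed lower Pascal matrix
`S i j = (-1) ^ j * C(i, j)`. Row `i` of `S` lists the coefficients of `(1 - X) ^ i`, so `S`
represents the substitution `p ↦ p(1 - X)` on polynomials of degree `< n`; this substitution is an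
involution, hence `S * S = 1`. Therefore `P⁻¹ = Sᵀ * S = S * (S * Sᵀ) * S⁻¹`.
-/

open Finset Matrix Polynomial

namespace Nat

theorem sum_range_choose_mul_choose_s5 {i n : ℕ} (j : ℕ) (hi : i < n) :
    ∑ k ∈ range n, i.choose k * j.choose k = (i + j).choose i := by
  have vandermonde : ∑ k ∈ range (i + 1), i.choose k * j.choose k = (i + j).choose i := by
    rw [add_choose_eq, ← Finset.Nat.sum_antidiagonal_swap]
    simp only [Prod.fst_swap, Prod.snd_swap]
    rw [Finset.Nat.sum_antidiagonal_eq_sum_range_succ (fun a b => i.choose b * j.choose a)]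
    refine sum_congr rfl fun k hk => ?_
    rw [choose_symm (mem_range_succ_iff.mp hk)]
  rw [← vandermonde, ← sum_range_add_sum_Ico _ hi, add_eq_left]
  refine sum_eq_zero fun k hk => ?_
  rw [choose_eq_zero_of_lt (mem_Ico.mp hk).1, zero_mul]

end Nat

namespace Polynomial

theorem coeff_one_sub_X_pow (R : Type*) [CommRing R] (n k : ℕ) :
    ((1 - X : R[X]) ^ n).coeff k = (-1) ^ k * n.choose k := by
  have : (1 - X : R[X]) ^ n = ((1 + X) ^ n).comp (C (-1) * X) := by
    simp [sub_eq_add_neg]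
  rw [this, comp_C_mul_X_coeff, coeff_one_add_X_pow, mul_comm]

theorem coeff_comp_eq_sum_range {R : Type*} [Semiring R] {p : R[X]} {n : ℕ}
    (hp : p.natDegree < n) (q : R[X]) (j : ℕ) :
    (p.comp q).coeff j = ∑ k ∈ range n, p.coeff k * (q ^ k).coeff j := by
  rw [comp_eq_sum_left, sum_over_range' _ (by simp) n hp, finsetSum_coeff]
  simp only [coeff_C_mul]

end Polynomial

namespace Matrix

variable (R : Type*) [CommRing R] (n : ℕ)

def signedPascal : Matrix (Fin n) (Fin n) R :=
  of fun i j => (-1) ^ (j : ℕ) * ((i : ℕ).choose j)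

theorem signedPascal_mul_self : signedPascal R n * signedPascal R n = 1 := by
  ext i j
  have hdeg : ((1 - X : R[X]) ^ (i : ℕ)).natDegree < n :=
    (natDegree_pow_le_of_le _ (by compute_degree!)).trans_lt (by simp)
  simp only [signedPascal, mul_apply, of_apply, one_apply, Fin.ext_iff, ← coeff_one_sub_X_pow]
  rw [Fin.sum_univ_eq_sum_range
      (fun k => ((1 - X : R[X]) ^ (i : ℕ)).coeff k * ((1 - X : R[X]) ^ k).coeff j),
    ← coeff_comp_eq_sum_range hdeg, pow_comp, sub_comp, one_comp, X_comp, sub_sub_cancel,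
    coeff_X_pow]
  simp only [eq_comm]

theorem signedPascal_mul_transpose :
    signedPascal R n * (signedPascal R n)ᵀ = of fun i j : Fin n => ((i + j : ℕ).choose i : R) := by
  ext i j
  have signs_cancel (k : ℕ) : (-1 : R) ^ k * (i : ℕ).choose k * ((-1) ^ k * (j : ℕ).choose k) =
      ((i : ℕ).choose k * (j : ℕ).choose k : ℕ) := by
    rw [mul_mul_mul_comm, ← mul_pow, neg_one_mul, neg_neg, one_pow, one_mul, Nat.cast_mul]
  simp only [signedPascal, mul_apply, of_apply, transpose_apply, signs_cancel]
  rw [Fin.sum_univ_eq_sum_range (fun k => (((i : ℕ).choose k * (j : ℕ).choose k : ℕ) : R)),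
    ← Nat.cast_sum, Nat.sum_range_choose_mul_choose_s5 _ i.isLt]

end Matrix

/-- The symmetric Pascal matrix `P(n)` is conjugate over `ℚ` to its inverse. -/
theorem symm_pascal_conjugate_inverse (n : ℕ) :
    ∃ S : Matrix (Fin n) (Fin n) ℚ, IsUnit S.det ∧
      (Matrix.of fun i j : Fin n => ((Nat.choose (i + j) i : ℚ)))⁻¹ =
        S * (Matrix.of fun i j : Fin n => ((Nat.choose (i + j) i : ℚ))) * S⁻¹ := by
  have involutive := signedPascal_mul_self ℚ n
  have inv_eq : (signedPascal ℚ n)⁻¹ = signedPascal ℚ n := inv_eq_left_inv involutive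
  refine ⟨signedPascal ℚ n, isUnit_det_of_left_inverse involutive, ?_⟩
  rw [← signedPascal_mul_transpose, Matrix.mul_inv_rev, ← transpose_nonsing_inv, inv_eq,
    ← mul_assoc, involutive, one_mul]
end

section
/- The determinant over ℤ of the matrix P̄(n)₂, whose (i,j) entry is the residue of C(i+j, i) modulo 2 taken in {0,1}, equals ∏_{k=0}^{n−1} (−1)^{s_k}, where s_k is the Thue–Morse sequence (the parity of the number of ones in the binary expansion of k). -/
private lemma land_ee (a b : ℕ) : (2*a) &&& (2*b) = 2*(a &&& b) := by
  have h1 : 2*a/2 = a := by omega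
  have h2 : 2*b/2 = b := by omega
  have h3 : 2*(a&&&b)/2 = a &&& b := by omega
  apply Nat.eq_of_testBit_eq
  intro i
  cases i with
  | zero =>
      simp only [Nat.testBit_zero, Nat.testBit_land]
      have : 2*a % 2 = 0 := by omega
      have : 2*b % 2 = 0 := by omega
      have : 2*(a&&&b) % 2 = 0 := by omega
      simp_all
  | succ i =>
      simp only [Nat.testBit_land]
      simp only [Nat.testBit_add_one, h1, h2, h3]
      simp [Nat.testBit_land]

private lemma land_eo (a b : ℕ) : (2*a) &&& (2*b+1) = 2*(a &&& b) := by
  have h1 : 2*a/2 = a := by omega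
  have h2 : (2*b+1)/2 = b := by omega
  have h3 : 2*(a&&&b)/2 = a &&& b := by omega
  apply Nat.eq_of_testBit_eq
  intro i
  cases i with
  | zero =>
      simp only [Nat.testBit_zero, Nat.testBit_land]
      have : 2*a % 2 = 0 := by omega
      have : 2*(a&&&b) % 2 = 0 := by omega
      simp_all
  | succ i =>
      simp only [Nat.testBit_land]
      simp only [Nat.testBit_add_one, h1, h2, h3]
      simp [Nat.testBit_land]

private lemma land_oe (a b : ℕ) : (2*a+1) &&& (2*b) = 2*(a &&& b) := by
  rw [Nat.and_comm, land_eo, Nat.and_comm]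

private lemma land_oo (a b : ℕ) : (2*a+1) &&& (2*b+1) = 2*(a &&& b) + 1 := by
  have h1 : (2*a+1)/2 = a := by omega
  have h2 : (2*b+1)/2 = b := by omega
  have h3 : (2*(a&&&b)+1)/2 = a &&& b := by omega
  apply Nat.eq_of_testBit_eq
  intro i
  cases i with
  | zero =>
      simp only [Nat.testBit_zero, Nat.testBit_land]
      have : (2*a+1) % 2 = 1 := by omega
      have : (2*b+1) % 2 = 1 := by omega
      have : (2*(a&&&b)+1) % 2 = 1 := by omega
      simp_all
  | succ i =>
      simp only [Nat.testBit_land]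
      simp only [Nat.testBit_add_one, h1, h2, h3]
      simp [Nat.testBit_land]

private lemma land_sub_iff (k i j : ℕ) :
    k &&& (i &&& j) = k ↔ (k &&& i = k ∧ k &&& j = k) := by
  constructor
  · intro h
    have hb : ∀ t, k.testBit t = (k.testBit t && (i.testBit t && j.testBit t)) := by
      intro t
      conv_lhs => rw [← h]
      simp [Nat.testBit_land]
    constructor <;>
      · apply Nat.eq_of_testBit_eq
        intro t
        have hbt := hb t
        simp only [Nat.testBit_land]
        cases hk : k.testBit t <;> cases hi : i.testBit t <;> cases hj : j.testBit t <;>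
          simp_all
  · rintro ⟨h1, h2⟩
    rw [← Nat.and_assoc, h1, h2]

private lemma sum_range_two_mul (f : ℕ → ℤ) (B : ℕ) :
    ∑ k ∈ Finset.range (2*B), f k = ∑ k ∈ Finset.range B, (f (2*k) + f (2*k+1)) := by
  induction B with
  | zero => simp
  | succ B ih =>
      rw [Finset.sum_range_succ, ← ih, show 2*(B+1) = 2*B+1+1 by ring,
        Finset.sum_range_succ, Finset.sum_range_succ]
      ring

private lemma ext_sum (m : ℕ) (g : ℕ → ℤ) (N : ℕ) (h : m < N) :
    ∑ k ∈ Finset.range N, (if k &&& m = k then g k else 0) =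
      ∑ k ∈ Finset.range (m+1), (if k &&& m = k then g k else 0) := by
  symm
  apply Finset.sum_subset
  · intro x hx
    simp only [Finset.mem_range] at *
    omega
  · intro k _ hk'
    simp only [Finset.mem_range] at hk'
    have : ¬ (k &&& m = k) := by
      intro hc
      have := Nat.and_le_right (n := k) (m := m)
      omega
    simp [this]

private lemma key_sum (s : ℕ → ℕ) (hs0 : s 0 = 0)
    (hseven : ∀ k, s (2 * k) = s k) (hsodd : ∀ k, s (2 * k + 1) = 1 - s k)
    (hle : ∀ k, s k ≤ 1) :
    ∀ m N, m < N →
      ∑ k ∈ Finset.range N, (if k &&& m = k then (-1:ℤ)^(s k) else 0) =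
        if m = 0 then 1 else 0 := by
  intro m
  induction m using Nat.strong_induction_on with
  | _ m ih =>
    intro N hN
    rw [ext_sum m _ N hN]
    rcases Nat.eq_zero_or_pos m with rfl | hm
    · simp [hs0]
    · rw [← ext_sum m _ (2*(m+1)) (by omega), sum_range_two_mul]
      rcases Nat.even_or_odd m with ⟨a, rfl⟩ | ⟨a, ha⟩
      · -- m = a + a = 2*a, a > 0
        have ha : a + a = 2*a := by ring
        rw [ha] at hm ⊢
        have hpos : 0 < a := by omega
        have hterm : ∀ k, ((if 2*k &&& 2*a = 2*k then (-1:ℤ)^(s (2*k)) else 0) +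
            (if (2*k+1) &&& 2*a = 2*k+1 then (-1:ℤ)^(s (2*k+1)) else 0)) =
            (if k &&& a = k then (-1:ℤ)^(s k) else 0) := by
          intro k
          rw [land_ee, land_oe, hseven]
          have h2 : ¬ (2*(k &&& a) = 2*k+1) := by omega
          rw [if_neg h2, add_zero]
          by_cases h : k &&& a = k
          · rw [if_pos (by omega), if_pos h]
          · rw [if_neg (by omega), if_neg h]
        rw [Finset.sum_congr rfl (fun k _ => hterm k)]
        rw [ih a (by omega) (2*a+1) (by omega)]
        rw [if_neg (by omega), if_neg (by omega)]
      · -- m = 2*a + 1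
        subst ha
        have hterm : ∀ k, ((if 2*k &&& (2*a+1) = 2*k then (-1:ℤ)^(s (2*k)) else 0) +
            (if (2*k+1) &&& (2*a+1) = 2*k+1 then (-1:ℤ)^(s (2*k+1)) else 0)) = 0 := by
          intro k
          rw [land_eo, land_oo, hseven, hsodd]
          by_cases h : k &&& a = k
          · rw [if_pos (by omega), if_pos (by omega)]
            rcases Nat.le_one_iff_eq_zero_or_eq_one.mp (hle k) with h1 | h1 <;>
              rw [h1] <;> norm_num
          · rw [if_neg (by omega), if_neg (by omega), add_zero]
        rw [Finset.sum_congr rfl (fun k _ => hterm k)]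
        simp

private lemma choose_parity (N : ℕ) : ∀ i j : ℕ, i + j ≤ N →
    ((Nat.choose (i+j) i : ZMod 2)) = if i &&& j = 0 then 1 else 0 := by
  induction N using Nat.strong_induction_on with
  | _ N ih =>
    intro i j hij
    rcases Nat.eq_zero_or_pos (i + j) with h0 | hpos
    · have hi : i = 0 := by omega
      have hj : j = 0 := by omega
      subst hi; subst hj; simp
    · have lucas := Choose.choose_modEq_choose_mod_mul_choose_div (n := i+j) (k := i) (p := 2)
      have lucas' : ((Nat.choose (i+j) i : ZMod 2)) =
          (Nat.choose ((i+j) % 2) (i % 2) : ZMod 2) * (Nat.choose ((i+j) / 2) (i / 2) : ZMod 2) := by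
        have := (ZMod.intCast_eq_intCast_iff _ _ _).mpr lucas
        push_cast at this
        exact_mod_cast this
      rcases Nat.even_or_odd i with ⟨a, hi⟩ | ⟨a, hi⟩ <;>
        rcases Nat.even_or_odd j with ⟨b, hj⟩ | ⟨b, hj⟩
      · -- both even
        have e1 : (i+j) % 2 = 0 := by omega
        have e2 : i % 2 = 0 := by omega
        have e3 : (i+j) / 2 = a + b := by omega
        have e4 : i / 2 = a := by omega
        rw [e1, e2, e3, e4] at lucas'
        rw [lucas', ih (a+b) (by omega) a b le_rfl]
        have hland : i &&& j = 2*(a &&& b) := by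
          rw [show i = 2*a by omega, show j = 2*b by omega, land_ee]
        by_cases h : a &&& b = 0
        · rw [if_pos h, if_pos (by omega)]; simp
        · rw [if_neg h, if_neg (by omega)]; simp
      · -- i even, j odd
        have e1 : (i+j) % 2 = 1 := by omega
        have e2 : i % 2 = 0 := by omega
        have e3 : (i+j) / 2 = a + b := by omega
        have e4 : i / 2 = a := by omega
        rw [e1, e2, e3, e4] at lucas'
        rw [lucas', ih (a+b) (by omega) a b le_rfl]
        have hland : i &&& j = 2*(a &&& b) := by
          rw [show i = 2*a by omega, show j = 2*b+1 by omega, land_eo]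
        by_cases h : a &&& b = 0
        · rw [if_pos h, if_pos (by omega)]; simp
        · rw [if_neg h, if_neg (by omega)]; simp
      · -- i odd, j even
        have e1 : (i+j) % 2 = 1 := by omega
        have e2 : i % 2 = 1 := by omega
        have e3 : (i+j) / 2 = a + b := by omega
        have e4 : i / 2 = a := by omega
        rw [e1, e2, e3, e4] at lucas'
        rw [lucas', ih (a+b) (by omega) a b le_rfl]
        have hland : i &&& j = 2*(a &&& b) := by
          rw [show i = 2*a+1 by omega, show j = 2*b by omega, land_oe]
        by_cases h : a &&& b = 0
        · rw [if_pos h, if_pos (by omega)]; simp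
        · rw [if_neg h, if_neg (by omega)]; simp
      · -- both odd
        have e1 : (i+j) % 2 = 0 := by omega
        have e2 : i % 2 = 1 := by omega
        rw [e1, e2] at lucas'
        have hland : i &&& j = 2*(a &&& b) + 1 := by
          rw [show i = 2*a+1 by omega, show j = 2*b+1 by omega, land_oo]
        rw [lucas', if_neg (by omega)]
        simp

private lemma choose_parity_int (i j : ℕ) :
    ((Nat.choose (i+j) i : ℤ) % 2) = if i &&& j = 0 then 1 else 0 := by
  have h := choose_parity (i+j) i j le_rfl
  have h2 : (Nat.choose (i+j) i) % 2 = if i &&& j = 0 then 1 else 0 := by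
    rw [← ZMod.natCast_mod (Nat.choose (i+j) i) 2] at h
    rcases Nat.mod_two_eq_zero_or_one (Nat.choose (i+j) i) with hm | hm <;>
      rw [hm] at h <;> split_ifs at h ⊢ with hc <;> simp_all
  rw [show ((Nat.choose (i+j) i : ℤ) % 2) = ((Nat.choose (i+j) i % 2 : ℕ) : ℤ) by push_cast; ring,
    h2]
  split_ifs <;> simp

/-- The determinant over `ℤ` of the reduction modulo 2 (with values in `{0,1}`)
of the symmetric Pascal matrix equals `∏_{k<n} (-1)^(s k)` where `s` is the
Thue–Morse sequence. -/
theorem det_pascal_mod_two (s : ℕ → ℕ) (hs0 : s 0 = 0)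
    (hseven : ∀ k, s (2 * k) = s k) (hsodd : ∀ k, s (2 * k + 1) = 1 - s k)
    (n : ℕ) :
    (Matrix.of fun i j : Fin n => ((Nat.choose (i + j) i % 2 : ℤ))).det =
      ∏ k ∈ Finset.range n, (-1 : ℤ) ^ s k := by
  classical
  have hle : ∀ k, s k ≤ 1 := by
    intro k
    induction k using Nat.strong_induction_on with
    | _ k ihk =>
      rcases Nat.even_or_odd k with ⟨a, rfl⟩ | ⟨a, rfl⟩
      · rcases Nat.eq_zero_or_pos a with rfl | hapos
        · simp [hs0]
        · rw [show a + a = 2*a by ring, hseven]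
          exact ihk a (by omega)
      · rw [hsodd]; omega
  set L : Matrix (Fin n) (Fin n) ℤ :=
    Matrix.of (fun i j : Fin n => if (j:ℕ) &&& (i:ℕ) = (j:ℕ) then 1 else 0) with hLdef
  set D : Matrix (Fin n) (Fin n) ℤ :=
    Matrix.diagonal (fun k : Fin n => (-1:ℤ)^(s k)) with hDdef
  have hfact : (Matrix.of fun i j : Fin n => ((Nat.choose (i + j) i % 2 : ℤ))) = L * D * L.transpose := by
    ext i j
    rw [Matrix.mul_apply]
    simp only [Matrix.mul_diagonal, Matrix.transpose_apply, Matrix.of_apply, hLdef, hDdef]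
    have hterm : ∀ k : Fin n,
        ((if (k:ℕ) &&& (i:ℕ) = (k:ℕ) then (1:ℤ) else 0) * (-1:ℤ)^(s k)) *
          (if (k:ℕ) &&& (j:ℕ) = (k:ℕ) then (1:ℤ) else 0) =
        (if (k:ℕ) &&& ((i:ℕ) &&& (j:ℕ)) = (k:ℕ) then (-1:ℤ)^(s k) else 0) := by
      intro k
      by_cases h1 : (k:ℕ) &&& (i:ℕ) = (k:ℕ) <;> by_cases h2 : (k:ℕ) &&& (j:ℕ) = (k:ℕ) <;>
        simp [h1, h2, land_sub_iff]
    rw [Finset.sum_congr rfl (fun k _ => hterm k)]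
    rw [show (∑ k : Fin n, (if (k:ℕ) &&& ((i:ℕ) &&& (j:ℕ)) = (k:ℕ) then (-1:ℤ)^(s k) else 0)) =
        ∑ k ∈ Finset.range n, (if k &&& ((i:ℕ) &&& (j:ℕ)) = k then (-1:ℤ)^(s k) else 0) from
      Fin.sum_univ_eq_sum_range (fun k => if k &&& ((i:ℕ) &&& (j:ℕ)) = k then (-1:ℤ)^(s k) else 0) n]
    have hmlt : (i:ℕ) &&& (j:ℕ) < n := lt_of_le_of_lt Nat.and_le_left i.isLt
    rw [key_sum s hs0 hseven hsodd hle _ n hmlt]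
    exact choose_parity_int i j
  rw [hfact, Matrix.det_mul, Matrix.det_mul, Matrix.det_transpose]
  have hLtri : L.BlockTriangular OrderDual.toDual := by
    intro i j hij
    have hij' : i < j := hij
    have : ¬ ((j:ℕ) &&& (i:ℕ) = (j:ℕ)) := by
      intro hc
      have := Nat.and_le_right (n := (j:ℕ)) (m := (i:ℕ))
      have : (j:ℕ) ≤ (i:ℕ) := by omega
      exact absurd (Fin.lt_def.mp hij') (by omega)
    simp [hLdef, this]
  have hLdet : L.det = 1 := by
    rw [Matrix.det_of_lowerTriangular L hLtri]
    apply Finset.prod_eq_one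
    intro i _
    simp [hLdef, Nat.and_self]
  rw [hLdet, Matrix.det_diagonal, one_mul, mul_one]
  exact Fin.prod_univ_eq_prod_range (fun k => (-1:ℤ)^(s k)) n
end

section
/- For all n, the matrix I − P(n)³ is nilpotent over 𝔽₂, where P(n) is the Pascal matrix with entries C(i+j, i) mod 2. -/
/-!
For `q = 2 ^ a`, Lucas' theorem gives the block form `P(2q) = [[P(q), P(q)], [P(q), 0]]` over
`𝔽₂`, from which `P(q)³ = 1` and `P(q)² = J P(q) J` (`J` the order-reversing permutation) follow
by induction on `a`.

For `2 ^ a ≤ n < n + t = 2 ^ (a + 1)`, Lucas' theorem also gives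
`P(n + t) = [[P(n), X], [Xᵀ, 0]]`. Comparing blocks in `P(n + t)³ = 1` shows, in characteristic
two, that `1 - P(n)³ = F G` with `F = [P(n) X | X]` and `G = [Xᵀ ; Xᵀ P(n)]`, and that
`(G F)² = diag(1 - D³, 1 - D³)` with `D = Xᵀ X`. The lower right block of `P(n + t)² = J P(n + t) J`
identifies `D` with `J P(t) J`. So `1 - P(n)³` is nilpotent as soon as `1 - P(t)³` is, and
`t ≤ 2 ^ a`, which sets up an induction on `a`.
-/

theorem natCast_choose_eq_choose_mod_pow_mul_choose_div_pow {p : ℕ} [Fact p.Prime] (a n k : ℕ) :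
    (Nat.choose n k : ZMod p) =
      Nat.choose (n % p ^ a) (k % p ^ a) * Nat.choose (n / p ^ a) (k / p ^ a) := by
  induction a generalizing n k with
  | zero => simp [Nat.mod_one]
  | succ a ih =>
    have lucas (n k : ℕ) :
        (Nat.choose n k : ZMod p) = Nat.choose (n % p) (k % p) * Nat.choose (n / p) (k / p) := by
      exact_mod_cast (ZMod.intCast_eq_intCast_iff _ _ p).mpr
        Choose.choose_modEq_choose_mod_mul_choose_div
    have hmod (m : ℕ) : m % p ^ (a + 1) % p = m % p := by
      rw [pow_succ', Nat.mod_mul_right_mod]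
    have hdiv (m : ℕ) : m % p ^ (a + 1) / p = m / p % p ^ a := by
      rw [pow_succ', Nat.mod_mul_right_div_self]
    rw [lucas (n % p ^ (a + 1)), hmod, hmod, hdiv, hdiv, lucas n k, ih (n / p),
      Nat.div_div_eq_div_mul, Nat.div_div_eq_div_mul, ← pow_succ', mul_assoc]

theorem natCast_choose_add_pow_mul_add_pow_mul {p : ℕ} [Fact p.Prime] {a n k : ℕ}
    (hn : n < p ^ a) (hk : k < p ^ a) (b c : ℕ) :
    (Nat.choose (n + p ^ a * b) (k + p ^ a * c) : ZMod p) = Nat.choose n k * Nat.choose b c := by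
  have hpa : 0 < p ^ a := pow_pos (Fact.out : p.Prime).pos a
  rw [natCast_choose_eq_choose_mod_pow_mul_choose_div_pow a, Nat.add_mul_mod_self_left,
    Nat.add_mul_mod_self_left, Nat.mod_eq_of_lt hn, Nat.mod_eq_of_lt hk,
    Nat.add_mul_div_left _ _ hpa, Nat.add_mul_div_left _ _ hpa, Nat.div_eq_of_lt hn,
    Nat.div_eq_of_lt hk, zero_add, zero_add]

theorem natCast_choose_add_pow_mul {p : ℕ} [Fact p.Prime] {a k : ℕ} (hk : k < p ^ a) (n b : ℕ) :
    (Nat.choose (n + p ^ a * b) k : ZMod p) = Nat.choose n k := by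
  rw [natCast_choose_eq_choose_mod_pow_mul_choose_div_pow a, Nat.add_mul_mod_self_left,
    Nat.div_eq_of_lt hk, Nat.choose_zero_right, Nat.cast_one, mul_one,
    natCast_choose_eq_choose_mod_pow_mul_choose_div_pow a n, Nat.div_eq_of_lt hk,
    Nat.choose_zero_right, Nat.cast_one, mul_one]

theorem natCast_choose_two_pow_add_add_two_pow_add_eq_zero {a x y : ℕ} (hx : x < 2 ^ a)
    (hy : y < 2 ^ a) : (Nat.choose (2 ^ a + x + (2 ^ a + y)) (2 ^ a + x) : ZMod 2) = 0 := by
  rw [show 2 ^ a + x = x + 2 ^ a * 1 by ring]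
  rcases lt_or_ge (x + y) (2 ^ a) with hxy | hxy
  · rw [show x + 2 ^ a * 1 + (2 ^ a + y) = x + y + 2 ^ a * 2 by ring,
      natCast_choose_add_pow_mul_add_pow_mul hxy hx]
    exact mul_eq_zero_of_right _ rfl
  · rw [show x + 2 ^ a * 1 + (2 ^ a + y) = (x + y - 2 ^ a) + 2 ^ a * 3 by omega,
      natCast_choose_add_pow_mul_add_pow_mul (by omega) hx, Nat.choose_eq_zero_of_lt (by omega),
      Nat.cast_zero, zero_mul]

namespace Matrix

variable {R : Type*} {m n t : Type*}

section Semiring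

variable [Semiring R]

theorem isNilpotent_mul_of_isNilpotent_mul_swap [Fintype m] [Fintype t] [DecidableEq m]
    [DecidableEq t] {F : Matrix m t R} {G : Matrix t m R} (h : IsNilpotent (G * F)) :
    IsNilpotent (F * G) := by
  have pow_succ_eq (k : ℕ) : (F * G) ^ (k + 1) = F * (G * F) ^ k * G := by
    induction k with
    | zero => simp
    | succ k ih => simp only [pow_succ _ (k + 1), ih, pow_succ, Matrix.mul_assoc]
  obtain ⟨k, hk⟩ := h
  exact ⟨k + 1, by rw [pow_succ_eq, hk, Matrix.mul_zero, Matrix.zero_mul]⟩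

theorem add_self_eq_zero_of_charTwo [CharP R 2] (M : Matrix m n R) : M + M = 0 := by
  ext; exact CharTwo.add_self_eq_zero _

variable [Fintype m] [Fintype t] [DecidableEq m] [DecidableEq t]

theorem toBlocks₂₂_fromBlocks_zero_sq (A : Matrix m m R) (X : Matrix m t R) (Y : Matrix t m R) :
    (fromBlocks A X Y 0 ^ 2).toBlocks₂₂ = Y * X := by
  simp [sq, fromBlocks_multiply]

variable [CharP R 2]

theorem fromBlocks_self_self_self_zero_sq_of_charTwo (A : Matrix m m R) :
    fromBlocks A A A 0 ^ 2 = fromBlocks 0 (A ^ 2) (A ^ 2) (A ^ 2) := by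
  simp [sq, fromBlocks_multiply, add_self_eq_zero_of_charTwo]

theorem fromBlocks_self_self_self_zero_pow_three_of_charTwo (A : Matrix m m R) :
    fromBlocks A A A 0 ^ 3 = fromBlocks (A ^ 3) 0 0 (A ^ 3) := by
  rw [pow_succ, fromBlocks_self_self_self_zero_sq_of_charTwo, fromBlocks_multiply]
  simp [pow_succ, add_self_eq_zero_of_charTwo]

end Semiring

section Ring

variable [Ring R] [CharP R 2]

theorem neg_eq_self_of_charTwo (M : Matrix m n R) : -M = M :=
  neg_eq_of_add_eq_zero_right M.add_self_eq_zero_of_charTwo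

variable [Fintype m] [Fintype t] [DecidableEq m] [DecidableEq t]

theorem isNilpotent_one_sub_pow_three_of_fromBlocks_zero {A : Matrix m m R} {X : Matrix m t R}
    {Y : Matrix t m R} (h : fromBlocks A X Y 0 ^ 3 = 1) (hYX : IsNilpotent (1 - (Y * X) ^ 3)) :
    IsNilpotent (1 - A ^ 3) := by
  rw [pow_succ, sq, fromBlocks_multiply, fromBlocks_multiply, ← fromBlocks_one, fromBlocks_inj]
    at h
  simp only [Matrix.mul_zero, Matrix.zero_mul, add_zero] at h
  obtain ⟨h₁₁, h₁₂, -, h₂₂⟩ := h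
  have hFG : fromCols (A * X) X * fromRows Y (Y * A) = 1 - A ^ 3 := by
    rw [fromCols_mul_fromRows, ← h₁₁]
    simp only [add_mul, pow_succ, pow_zero, Matrix.one_mul, Matrix.mul_assoc]
    abel
  have hAAX : A * A * X = X * Y * X := by
    rw [Matrix.add_mul] at h₁₂
    rw [eq_neg_of_add_eq_zero_left h₁₂, neg_eq_self_of_charTwo]
  set D := Y * X
  have hGF : fromRows Y (Y * A) * fromCols (A * X) X = fromBlocks 1 D (D * D) 1 := by
    rw [fromRows_mul_fromCols, ← h₂₂, Matrix.mul_assoc Y A X, Matrix.mul_assoc Y A (A * X),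
      ← Matrix.mul_assoc A A X, hAAX]
    simp only [D, Matrix.mul_assoc]
  have hGF_sq : (fromRows Y (Y * A) * fromCols (A * X) X) ^ 2 =
      fromBlocks (1 - D ^ 3) 0 0 (1 - D ^ 3) := by
    rw [hGF, sq, fromBlocks_multiply, sub_eq_add_neg, neg_eq_self_of_charTwo]
    simp only [Matrix.one_mul, Matrix.mul_one, add_self_eq_zero_of_charTwo, pow_succ, pow_zero,
      Matrix.mul_assoc, add_comm (D * (D * D))]
  obtain ⟨k, hk⟩ := hYX
  rw [← hFG]
  refine isNilpotent_mul_of_isNilpotent_mul_swap (IsNilpotent.of_pow (m := 2) ⟨k, ?_⟩)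
  rw [hGF_sq, fromBlocks_diagonal_pow, hk, fromBlocks_zero]

end Ring

end Matrix

open Matrix

def pascalMod2 (n : ℕ) : Matrix (Fin n) (Fin n) (ZMod 2) :=
  of fun i j => (Nat.choose (i + j) i : ZMod 2)

theorem pascalMod2_transpose (n : ℕ) : (pascalMod2 n)ᵀ = pascalMod2 n := by
  ext i j
  rw [transpose_apply, pascalMod2, of_apply, of_apply, add_comm (j : ℕ), Nat.choose_symm_add]

theorem reindex_pascalMod2_add {a n t : ℕ} (hn : 2 ^ a ≤ n) (ht : n + t ≤ 2 ^ (a + 1)) :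
    reindexAlgEquiv (ZMod 2) (ZMod 2) finSumFinEquiv.symm (pascalMod2 (n + t)) =
      fromBlocks (pascalMod2 n) ((pascalMod2 (n + t)).submatrix (Fin.castAdd t) (Fin.natAdd n))
        ((pascalMod2 (n + t)).submatrix (Fin.castAdd t) (Fin.natAdd n))ᵀ 0 := by
  ext (i | i) (j | j)
  · simp [pascalMod2]
  · simp [pascalMod2]
  · simp only [coe_reindexAlgEquiv, reindex_apply, Equiv.symm_symm, submatrix_apply,
      finSumFinEquiv_apply_left, finSumFinEquiv_apply_right, fromBlocks_apply₂₁, transpose_apply,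
      pascalMod2, of_apply, Fin.val_castAdd, Fin.val_natAdd]
    rw [add_comm (j : ℕ), Nat.choose_symm_add]
  · have hx : (n + i : ℕ) = 2 ^ a + (n + i - 2 ^ a) := by omega
    have hy : (n + j : ℕ) = 2 ^ a + (n + j - 2 ^ a) := by omega
    have := pow_succ 2 a
    simp only [coe_reindexAlgEquiv, reindex_apply, Equiv.symm_symm, submatrix_apply,
      finSumFinEquiv_apply_right, fromBlocks_apply₂₂, pascalMod2, of_apply, Fin.val_natAdd,
      Matrix.zero_apply]
    rw [hx, hy, natCast_choose_two_pow_add_add_two_pow_add_eq_zero (by omega) (by omega)]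

theorem reindex_pascalMod2_two_pow_add_two_pow (a : ℕ) :
    reindexAlgEquiv (ZMod 2) (ZMod 2) finSumFinEquiv.symm (pascalMod2 (2 ^ a + 2 ^ a)) =
      fromBlocks (pascalMod2 (2 ^ a)) (pascalMod2 (2 ^ a)) (pascalMod2 (2 ^ a)) 0 := by
  have hX : (pascalMod2 (2 ^ a + 2 ^ a)).submatrix (Fin.castAdd _) (Fin.natAdd _) =
      pascalMod2 (2 ^ a) := by
    ext i j
    simp only [submatrix_apply, pascalMod2, of_apply, Fin.val_castAdd, Fin.val_natAdd]
    rw [show (i : ℕ) + (2 ^ a + j) = i + j + 2 ^ a * 1 by ring, natCast_choose_add_pow_mul i.isLt]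
  rw [reindex_pascalMod2_add le_rfl (by rw [pow_succ, mul_two]), hX, pascalMod2_transpose]

theorem reindex_pascalMod2_two_pow_add_two_pow_submatrix_rev (a : ℕ) :
    reindexAlgEquiv (ZMod 2) (ZMod 2) finSumFinEquiv.symm
        ((pascalMod2 (2 ^ a + 2 ^ a)).submatrix Fin.rev Fin.rev) =
      fromBlocks 0 ((pascalMod2 (2 ^ a)).submatrix Fin.rev Fin.rev)
        ((pascalMod2 (2 ^ a)).submatrix Fin.rev Fin.rev)
        ((pascalMod2 (2 ^ a)).submatrix Fin.rev Fin.rev) := by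
  have hP := reindex_pascalMod2_two_pow_add_two_pow a
  ext (i | i) (j | j)
  · simpa [Fin.rev_castAdd] using congr_fun₂ hP (.inr i.rev) (.inr j.rev)
  · simpa [Fin.rev_castAdd, Fin.rev_addNat] using congr_fun₂ hP (.inr i.rev) (.inl j.rev)
  · simpa [Fin.rev_castAdd, Fin.rev_addNat] using congr_fun₂ hP (.inl i.rev) (.inr j.rev)
  · simpa [Fin.rev_addNat] using congr_fun₂ hP (.inl i.rev) (.inl j.rev)

theorem pascalMod2_two_pow_pow_three (a : ℕ) : pascalMod2 (2 ^ a) ^ 3 = 1 := by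
  induction a with
  | zero => decide
  | succ a ih =>
    rw [pow_succ (2 : ℕ) a, mul_two]
    apply (reindexAlgEquiv (ZMod 2) (ZMod 2) finSumFinEquiv.symm).injective
    rw [map_pow, map_one, reindex_pascalMod2_two_pow_add_two_pow,
      fromBlocks_self_self_self_zero_pow_three_of_charTwo, ih, fromBlocks_one]

theorem pascalMod2_two_pow_sq (a : ℕ) :
    pascalMod2 (2 ^ a) ^ 2 = (pascalMod2 (2 ^ a)).submatrix Fin.rev Fin.rev := by
  induction a with
  | zero => decide
  | succ a ih =>
    rw [pow_succ (2 : ℕ) a, mul_two]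
    apply (reindexAlgEquiv (ZMod 2) (ZMod 2) finSumFinEquiv.symm).injective
    rw [map_pow, reindex_pascalMod2_two_pow_add_two_pow,
      fromBlocks_self_self_self_zero_sq_of_charTwo, ih,
      reindex_pascalMod2_two_pow_add_two_pow_submatrix_rev]

theorem isNilpotent_one_sub_pascalMod2_pow_three_of_add_eq_two_pow {a n t : ℕ} (hn : 2 ^ a ≤ n)
    (ht : n + t = 2 ^ (a + 1)) (h : IsNilpotent (1 - pascalMod2 t ^ 3)) :
    IsNilpotent (1 - pascalMod2 n ^ 3) := by
  have hblocks := reindex_pascalMod2_add hn ht.le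
  set X := (pascalMod2 (n + t)).submatrix (Fin.castAdd t) (Fin.natAdd n)
  have hP3 : pascalMod2 (n + t) ^ 3 = 1 := by rw [ht]; exact pascalMod2_two_pow_pow_three (a + 1)
  have hP2 : pascalMod2 (n + t) ^ 2 = (pascalMod2 (n + t)).submatrix Fin.rev Fin.rev := by
    rw [ht]; exact pascalMod2_two_pow_sq (a + 1)
  have hcube : fromBlocks (pascalMod2 n) X Xᵀ 0 ^ 3 = 1 := by
    rw [← hblocks, ← map_pow, hP3, map_one]
  have hXX : Xᵀ * X = (pascalMod2 t).submatrix Fin.rev Fin.rev := by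
    rw [← toBlocks₂₂_fromBlocks_zero_sq (pascalMod2 n), ← hblocks, ← map_pow, hP2]
    ext i j
    simp only [toBlocks₂₂, coe_reindexAlgEquiv, reindex_apply, Equiv.symm_symm, submatrix_apply,
      finSumFinEquiv_apply_right, of_apply, pascalMod2, Fin.val_rev, Fin.val_natAdd]
    rw [show n + t - (n + i + 1) = t - (i + 1) by omega,
      show n + t - (n + j + 1) = t - (j + 1) by omega]
  refine isNilpotent_one_sub_pow_three_of_fromBlocks_zero hcube ?_
  have := h.map (reindexAlgEquiv (ZMod 2) (ZMod 2) (Fin.revPerm : Equiv.Perm (Fin t)))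
  rw [map_sub, map_one, map_pow, coe_reindexAlgEquiv, reindex_apply] at this
  rw [hXX]
  exact this

theorem isNilpotent_one_sub_pascalMod2_pow_three_of_le_two_pow {a n : ℕ} (h : n ≤ 2 ^ a) :
    IsNilpotent (1 - pascalMod2 n ^ 3) := by
  induction a generalizing n with
  | zero => interval_cases n <;> exact ⟨1, by decide⟩
  | succ a ih =>
    rcases le_or_gt n (2 ^ a) with hn | hn
    · exact ih hn
    · have := pow_succ 2 a
      exact isNilpotent_one_sub_pascalMod2_pow_three_of_add_eq_two_pow hn.le
        (t := 2 ^ (a + 1) - n) (by omega) (ih (by omega))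

/-- Over `𝔽₂`, the matrix `I - P(n)³` is nilpotent, where `P(n)` is the
symmetric Pascal matrix modulo 2. -/
theorem one_sub_pascal_cube_nilpotent (n : ℕ) :
    IsNilpotent ((1 : Matrix (Fin n) (Fin n) (ZMod 2)) -
      (Matrix.of fun i j : Fin n => ((Nat.choose (i + j) i : ZMod 2))) ^ 3) :=
  isNilpotent_one_sub_pascalMod2_pow_three_of_le_two_pow n.lt_two_pow_self.le
end

section
/- With γ defined by γ(0)=0, γ(2^l−k) = (2^l+2(−1)^l)/3 − k + 2γ(k) for 0 ≤ k ≤ 2^{l−1}, one has γ(2^l + k) = (2^l + 2(−1)^l)/3 − k + 4γ(k) for all 0 ≤ k ≤ 2^{l−1}. -/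
/-- `γ(2^l + k) = (2^l + 2(-1)^l)/3 - k + 4γ(k)` for `0 ≤ k ≤ 2^(l-1)`. -/
theorem gamma_add (γ : ℕ → ℕ) (hγ0 : γ 0 = 0)
    (hγ : ∀ l k : ℕ, 1 ≤ l → k ≤ 2 ^ (l - 1) →
      (3 * γ (2 ^ l - k) : ℤ) = 2 ^ l + 2 * (-1) ^ l - 3 * k + 6 * γ k) (l k : ℕ) (hl : 1 ≤ l) (hk : k ≤ 2 ^ (l - 1)) :
    (3 * γ (2 ^ l + k) : ℤ) = 2 ^ l + 2 * (-1) ^ l - 3 * k + 12 * γ k := by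
  have hkl : k ≤ 2 ^ l := hk.trans (Nat.pow_le_pow_right (by norm_num) (Nat.sub_le l 1))
  have h1 : 2 ^ l - k ≤ 2 ^ (l + 1 - 1) := by
    simpa using Nat.sub_le (2 ^ l) k
  have h2 := hγ (l + 1) (2 ^ l - k) (by omega) h1
  have h3 := hγ l k hl hk
  have heq : 2 ^ (l + 1) - (2 ^ l - k) = 2 ^ l + k := by
    have : 2 ^ (l + 1) = 2 ^ l + 2 ^ l := by ring
    omega
  rw [heq] at h2
  have hcast : ((2 ^ l - k : ℕ) : ℤ) = 2 ^ l - k := by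
    push_cast [Nat.cast_sub hkl]; ring
  rw [hcast] at h2
  have : (3 : ℤ) * (3 * γ (2 ^ l + k)) = 3 * (2 ^ l + 2 * (-1) ^ l - 3 * k + 12 * γ k) := by
    rw [h2]; push_cast [pow_succ] at h3 ⊢
    linarith [h3]
  linarith
end

section
/- With γ as defined, for all l and all 2^{l−2} ≤ k ≤ 2^{l−1} one has γ(2^l − k) = γ(k) + 2γ(2^{l−1} − k). -/
/-- `γ(2^l - k) = γ(k) + 2γ(2^(l-1) - k)` for `2^(l-2) ≤ k ≤ 2^(l-1)`. -/
theorem gamma_sub (γ : ℕ → ℕ) (hγ0 : γ 0 = 0)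
    (hγ : ∀ l k : ℕ, 1 ≤ l → k ≤ 2 ^ (l - 1) →
      (3 * γ (2 ^ l - k) : ℤ) = 2 ^ l + 2 * (-1) ^ l - 3 * k + 6 * γ k) (l k : ℕ) (hl : 2 ≤ l)
    (hk1 : 2 ^ (l - 2) ≤ k) (hk2 : k ≤ 2 ^ (l - 1)) :
    γ (2 ^ l - k) = γ k + 2 * γ (2 ^ (l - 1) - k) := by
  obtain ⟨m, rfl⟩ : ∃ m, l = m + 2 := ⟨l - 2, by omega⟩
  simp only [Nat.add_sub_cancel, show m + 2 - 1 = m + 1 from rfl] at *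
  have h1 := hγ (m + 2) k (by omega) (by simpa using hk2)
  have h2 := hγ (m + 1) (2 ^ (m + 1) - k) (by omega)
      (by simp only [Nat.add_sub_cancel]; omega)
  have hsub : 2 ^ (m + 1) - (2 ^ (m + 1) - k) = k := by omega
  rw [hsub] at h2
  have hc : ((2 ^ (m + 1) - k : ℕ) : ℤ) = 2 ^ (m + 1) - k := by
    push_cast [hk2]; ring
  rw [hc] at h2
  have hpow : ((-1 : ℤ)) ^ (m + 2) = (-1) ^ (m + 1) * (-1) := by ring
  have : (3 : ℤ) * γ (2 ^ (m + 2) - k) =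
      3 * (γ k + 2 * γ (2 ^ (m + 1) - k)) := by
    rw [h1]
    push_cast
    rw [hpow] at *
    ring_nf
    ring_nf at h2
    linarith
  have h3 : (γ (2 ^ (m + 2) - k) : ℤ) = γ k + 2 * γ (2 ^ (m + 1) - k) := by linarith
  exact_mod_cast h3
end

section
/- With γ as defined, for all l ≥ 1 and 1 ≤ k ≤ 2^l one has γ(2^l + k) = 1 + γ(2^l + k − 1) + 2γ(2^l − k) − 2γ(2^l + 1 − k). -/
/-- `γ(2^l + k) = 1 + γ(2^l + k - 1) + 2γ(2^l - k) - 2γ(2^l + 1 - k)`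
for `1 ≤ k ≤ 2^l`. -/
theorem gamma_rec (γ : ℕ → ℕ) (hγ0 : γ 0 = 0)
    (hγ : ∀ l k : ℕ, 1 ≤ l → k ≤ 2 ^ (l - 1) →
      (3 * γ (2 ^ l - k) : ℤ) = 2 ^ l + 2 * (-1) ^ l - 3 * k + 6 * γ k) (l k : ℕ) (hl : 1 ≤ l) (hk1 : 1 ≤ k) (hk2 : k ≤ 2 ^ l) :
    (γ (2 ^ l + k) : ℤ) =
      1 + γ (2 ^ l + k - 1) + 2 * γ (2 ^ l - k) - 2 * γ (2 ^ l + 1 - k) := by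
  have hpow : (2:ℕ) ^ (l + 1) = 2 ^ l + 2 ^ l := by ring
  have h1 := hγ (l + 1) (2 ^ l - k) (by omega) (by simp)
  have h2 := hγ (l + 1) (2 ^ l + 1 - k) (by omega) (by simp; omega)
  have e1 : 2 ^ (l + 1) - (2 ^ l - k) = 2 ^ l + k := by omega
  have e2 : 2 ^ (l + 1) - (2 ^ l + 1 - k) = 2 ^ l + k - 1 := by omega
  rw [e1] at h1
  rw [e2] at h2
  have c1 : ((2 ^ l - k : ℕ) : ℤ) = 2 ^ l - k := by
    push_cast [Nat.cast_sub hk2]; ring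
  have c2 : ((2 ^ l + 1 - k : ℕ) : ℤ) = 2 ^ l + 1 - k := by
    have : k ≤ 2 ^ l + 1 := by omega
    push_cast [Nat.cast_sub this]; ring
  rw [c1] at h1
  rw [c2] at h2
  have hp : ((2:ℤ) ^ (l + 1)) = 2 ^ l + 2 ^ l := by ring
  linarith [h1, h2]
end

section
/- With γ as defined and b(n) the number of maximal blocks of consecutive ones in the binary representation of n, one has for all n ≥ 1: γ(2n) = n − γ(n), γ(2n−1) = n − γ(n) + (4^{b(2n−1)} − 1)/3, and γ(2n+1) = n − γ(n) + (2^{1+2b(n)} + 1)/3. -/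
lemma gvb_b_joint (b : ℕ → ℕ) (hb0 : b 0 = 0) (hbeven : ∀ n, b (2 * n) = b n)
    (hbodd : ∀ n, b (2 * n + 1) = b n + 1 - n % 2) :
    ∀ l : ℕ,
      (∀ k, 2 * k + 1 ≤ 2 ^ l → b (2 ^ (l + 1) - (2 * k + 1)) = b k + 1) ∧
      (∀ k, 1 ≤ k → k ≤ 2 ^ l → b (2 ^ (l + 1) - k) = b (2 * k - 1)) := by
  intro l
  induction l using Nat.strong_induction_on with
  | _ l IH =>
    have hB1 : ∀ k, 2 * k + 1 ≤ 2 ^ l → b (2 ^ (l + 1) - (2 * k + 1)) = b k + 1 := by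
      intro k hk
      match l, hk with
      | 0, hk =>
        have hk0 : k = 0 := by omega
        subst hk0
        have h := hbodd 0
        simp at h ⊢
        omega
      | (l' + 1), hk =>
        have hp1 : (2:ℕ) ^ (l' + 1) = 2 * 2 ^ l' := by ring
        have hp2 : (2:ℕ) ^ (l' + 2) = 4 * 2 ^ l' := by ring
        rcases Nat.even_or_odd k with ⟨j, hj⟩ | ⟨j, hj⟩
        · -- k = 2j
          subst hj
          have harg : 2 ^ (l' + 1 + 1) - (2 * (j + j) + 1)
              = 2 * (2 ^ (l' + 1) - (2 * j + 1)) + 1 := by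
            have : (2:ℕ) ^ (l' + 1 + 1) = 4 * 2 ^ l' := by ring
            omega
          rw [harg, hbodd]
          have hmod : (2 ^ (l' + 1) - (2 * j + 1)) % 2 = 1 := by omega
          have hrec := (IH l' (by omega)).1 j (by omega)
          rw [hmod, hrec]
          have : j + j = 2 * j := by ring
          rw [this, hbeven]
          omega
        · -- k = 2j+1
          subst hj
          match l', hk with
          | 0, hk => omega
          | (l'' + 1), hk =>
            have hq1 : (2:ℕ) ^ (l'' + 1) = 2 * 2 ^ l'' := by ring
            have hq2 : (2:ℕ) ^ (l'' + 2) = 4 * 2 ^ l'' := by ring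
            have hq3 : (2:ℕ) ^ (l'' + 3) = 8 * 2 ^ l'' := by ring
            have harg : 2 ^ (l'' + 1 + 1 + 1) - (2 * (2 * j + 1) + 1)
                = 2 * (2 * (2 ^ (l'' + 1) - (j + 1))) + 1 := by omega
            rw [harg, hbodd, hbeven]
            have hmod : (2 * (2 ^ (l'' + 1) - (j + 1))) % 2 = 0 := by omega
            have hrec := (IH l'' (by omega)).2 (j + 1) (by omega) (by omega)
            have h21 : 2 * (j + 1) - 1 = 2 * j + 1 := by omega
            rw [h21] at hrec
            rw [hmod, hrec]
            omega
    have hB2 : ∀ k, 1 ≤ k → k ≤ 2 ^ l → b (2 ^ (l + 1) - k) = b (2 * k - 1) := by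
      intro k hk1 hk2
      rcases Nat.even_or_odd k with ⟨j, hj⟩ | ⟨j, hj⟩
      · -- k = 2j, j ≥ 1
        subst hj
        match l, hk2 with
        | 0, hk2 => omega
        | (l' + 1), hk2 =>
          have hp1 : (2:ℕ) ^ (l' + 1) = 2 * 2 ^ l' := by ring
          have hp2 : (2:ℕ) ^ (l' + 2) = 4 * 2 ^ l' := by ring
          have harg : 2 ^ (l' + 1 + 1) - (j + j) = 2 * (2 ^ (l' + 1) - j) := by omega
          rw [harg, hbeven]
          have hrec := (IH l' (by omega)).2 j (by omega) (by omega)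
          have htar : 2 * (j + j) - 1 = 2 * (2 * j - 1) + 1 := by omega
          rw [htar, hbodd]
          have hmod : (2 * j - 1) % 2 = 1 := by omega
          rw [hmod, hrec]
          omega
      · -- k = 2j+1
        subst hj
        have hrec := hB1 j (by omega)
        have htar : 2 * (2 * j + 1) - 1 = 2 * (2 * j) + 1 := by omega
        rw [htar, hbodd, hbeven]
        have hmod : (2 * j) % 2 = 0 := by omega
        rw [hmod, hrec]
        omega
    exact ⟨hB1, hB2⟩

lemma gvb_b_pow (b : ℕ → ℕ) (hb0 : b 0 = 0) (hbeven : ∀ n, b (2 * n) = b n)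
    (hbodd : ∀ n, b (2 * n + 1) = b n + 1 - n % 2) :
    ∀ m : ℕ, b (2 ^ m) = 1 := by
  intro m
  induction m with
  | zero => have := hbodd 0; simpa [hb0] using this
  | succ m ih =>
    have : (2:ℕ) ^ (m + 1) = 2 * 2 ^ m := by ring
    rw [this, hbeven, ih]

/-- With `b` counting the maximal blocks of consecutive ones in binary, one has
`γ(2n) = n - γ(n)`, `γ(2n-1) = n - γ(n) + (4^(b(2n-1)) - 1)/3` and
`γ(2n+1) = n - γ(n) + (2^(1+2b(n)) + 1)/3` for `n ≥ 1`. -/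
theorem gamma_via_blocks (γ : ℕ → ℕ) (hγ0 : γ 0 = 0)
    (hγ : ∀ l k : ℕ, 1 ≤ l → k ≤ 2 ^ (l - 1) →
      (3 * γ (2 ^ l - k) : ℤ) = 2 ^ l + 2 * (-1) ^ l - 3 * k + 6 * γ k)
    (b : ℕ → ℕ) (hb0 : b 0 = 0) (hbeven : ∀ n, b (2 * n) = b n)
    (hbodd : ∀ n, b (2 * n + 1) = b n + 1 - n % 2)
    (n : ℕ) (hn : 1 ≤ n) :
    (γ (2 * n) : ℤ) = n - γ n ∧
    (3 * γ (2 * n - 1) : ℤ) = 3 * n - 3 * γ n + 4 ^ b (2 * n - 1) - 1 ∧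
    (3 * γ (2 * n + 1) : ℤ) = 3 * n - 3 * γ n + 2 ^ (1 + 2 * b n) + 1 := by
  have hB := gvb_b_joint b hb0 hbeven hbodd
  have hbpow := gvb_b_pow b hb0 hbeven hbodd
  have hb1 : b 1 = 1 := by simpa using hbpow 0
  have hγ1 : (γ 1 : ℤ) = 1 := by
    have h := hγ 1 1 le_rfl (by norm_num)
    norm_num at h
    linarith
  have key : ∀ N : ℕ, 1 ≤ N →
      (γ (2 * N) : ℤ) = N - γ N ∧
      (3 * γ (2 * N - 1) : ℤ) = 3 * N - 3 * γ N + 4 ^ b (2 * N - 1) - 1 ∧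
      (3 * γ (2 * N + 1) : ℤ) = 3 * N - 3 * γ N + 2 ^ (1 + 2 * b N) + 1 := by
    intro N
    induction N using Nat.strong_induction_on with
    | _ n IH =>
      intro hn
      rcases eq_or_lt_of_le hn with h1 | h2
      · -- n = 1
        subst h1
        have hg2 : (3 * γ 2 : ℤ) = 0 := by
          have h := hγ 1 0 le_rfl (Nat.zero_le _)
          rw [show 2 ^ 1 - 0 = 2 from rfl, hγ0] at h
          push_cast at h
          linarith [h]
        have hg3 : (3 * γ 3 : ℤ) = 9 := by
          have h := hγ 2 1 (by norm_num) (by norm_num)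
          rw [show 2 ^ 2 - 1 = 3 from rfl] at h
          push_cast at h
          rw [h]
          linarith
        refine ⟨?_, ?_, ?_⟩
        · rw [show 2 * 1 = 2 from rfl]
          push_cast
          linarith
        · rw [show 2 * 1 - 1 = 1 from rfl, hb1]
          push_cast
          linarith
        · rw [show 2 * 1 + 1 = 3 from rfl, hb1]
          push_cast
          linarith
      · -- n ≥ 2
        have hn2 : 2 ≤ n := h2
        set m := Nat.log 2 n with hmdef
        have hm1 : 2 ^ m ≤ n := Nat.pow_log_le_self 2 (by omega)
        have hm2 : n < 2 ^ (m + 1) := Nat.lt_pow_succ_log_self (by norm_num) n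
        have hp1 : (2:ℕ) ^ (m + 1) = 2 * 2 ^ m := by ring
        have hp2 : (2:ℕ) ^ (m + 2) = 4 * 2 ^ m := by ring
        have hp2' : (2:ℕ) ^ (m + 1 + 1) = 4 * 2 ^ m := by ring
        have hmpos : 1 ≤ m := by
          rcases Nat.eq_zero_or_pos m with h0 | h
          · rw [h0] at hm2; norm_num at hm2; omega
          · exact h
        have hz1 : (2:ℤ) ^ (m + 1) = 2 * 2 ^ m := by ring
        have hz2 : (2:ℤ) ^ (m + 2) = 4 * 2 ^ m := by ring
        have he1 : ((-1):ℤ) ^ (m + 1) = -((-1):ℤ) ^ m := by rw [pow_succ]; ring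
        have he2 : ((-1):ℤ) ^ (m + 2) = ((-1):ℤ) ^ m := by rw [pow_succ, pow_succ]; ring
        have hsub1 : m + 1 - 1 = m := by omega
        have hsub2 : m + 2 - 1 = m + 1 := by omega
        by_cases hc : n = 2 ^ m
        · -- n = 2^m : the k = 0 case
          have En := hγ m 0 hmpos (Nat.zero_le _)
          rw [show 2 ^ m - 0 = n by omega, hγ0] at En
          push_cast at En
          have EA := hγ (m + 1) 0 (by omega) (Nat.zero_le _)
          rw [show 2 ^ (m + 1) - 0 = 2 * n by omega, hγ0] at EA
          push_cast at EA
          have EB := hγ (m + 1) 1 (by omega) (by rw [hsub1]; omega)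
          rw [show 2 ^ (m + 1) - 1 = 2 * n - 1 by omega] at EB
          push_cast at EB
          have EC := hγ (m + 2) (2 ^ (m + 1) - 1) (by omega) (by rw [hsub2]; omega)
          rw [show 2 ^ (m + 2) - (2 ^ (m + 1) - 1) = 2 * n + 1 by omega] at EC
          rw [show 2 ^ (m + 1) - 1 = 2 * n - 1 by omega] at EC
          rw [Nat.cast_sub (by omega : 1 ≤ 2 * n)] at EC
          push_cast at EC
          have hb2n1 : b (2 * n - 1) = 1 := by
            have h := (hB m).1 0 (by omega)
            rw [show 2 ^ (m + 1) - (2 * 0 + 1) = 2 * n - 1 by omega, hb0] at h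
            exact h
          have hbn : b n = 1 := by rw [hc]; exact hbpow m
          have hnz : (n:ℤ) = 2 ^ m := by exact_mod_cast congrArg (Nat.cast (R := ℤ)) hc
          refine ⟨?_, ?_, ?_⟩
          · linarith [EA, En, hz1, he1, hnz]
          · rw [hb2n1]
            norm_num
            linarith [EB, En, hγ1, hz1, he1, hnz]
          · rw [hbn]
            norm_num
            linarith [EC, EB, En, hγ1, hz1, hz2, he1, he2, hnz]
        · -- 2^m < n < 2^(m+1)
          have hlt : 2 ^ m < n := lt_of_le_of_ne hm1 (Ne.symm hc)
          set k := 2 ^ (m + 1) - n with hkdef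
          have hk1 : 1 ≤ k := by omega
          have hk2 : k < 2 ^ m := by omega
          have hkn : k < n := by omega
          obtain ⟨Ak, Bk, Ck⟩ := IH k hkn hk1
          have En := hγ (m + 1) k (by omega) (by rw [hsub1]; omega)
          rw [show 2 ^ (m + 1) - k = n by omega] at En
          have EA := hγ (m + 2) (2 * k) (by omega) (by rw [hsub2]; omega)
          rw [show 2 ^ (m + 2) - 2 * k = 2 * n by omega] at EA
          push_cast at EA
          have EB := hγ (m + 2) (2 * k + 1) (by omega) (by rw [hsub2]; omega)
          rw [show 2 ^ (m + 2) - (2 * k + 1) = 2 * n - 1 by omega] at EB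
          push_cast at EB
          have EC := hγ (m + 2) (2 * k - 1) (by omega) (by rw [hsub2]; omega)
          rw [show 2 ^ (m + 2) - (2 * k - 1) = 2 * n + 1 by omega] at EC
          rw [Nat.cast_sub (by omega : 1 ≤ 2 * k)] at EC
          push_cast at EC
          have hbB : b (2 * n - 1) = b k + 1 := by
            have h := (hB (m + 1)).1 k (by omega)
            rw [show 2 ^ (m + 1 + 1) - (2 * k + 1) = 2 * n - 1 by omega] at h
            exact h
          have hbC : b n = b (2 * k - 1) := by
            have h := (hB m).2 k hk1 (by omega)
            rw [show 2 ^ (m + 1) - k = n by omega] at h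
            exact h
          have h4B : ((4:ℤ)) ^ b (2 * n - 1) = 4 * 4 ^ b k := by
            rw [hbB, pow_succ]; ring
          have h2k : ((2:ℤ)) ^ (1 + 2 * b k) = 2 * 4 ^ b k := by
            rw [pow_add, pow_mul]; norm_num
          have h2n : ((2:ℤ)) ^ (1 + 2 * b n) = 2 * 4 ^ b (2 * k - 1) := by
            rw [hbC, pow_add, pow_mul]; norm_num
          have hnzk : (n:ℤ) + k = 2 ^ (m + 1) := by
            have h : n + k = 2 ^ (m + 1) := by omega
            exact_mod_cast congrArg (Nat.cast (R := ℤ)) h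
          refine ⟨?_, ?_, ?_⟩
          · linarith [EA, En, Ak, hz1, hz2, he1, he2, hnzk]
          · linarith [EB, En, Ck, h4B, h2k, hz1, hz2, he1, he2, hnzk]
          · linarith [EC, En, Bk, h2n, hz1, hz2, he1, he2, hnzk]
  exact key n hn
end

section
/- For an odd prime p, the trace of the Pascal matrix P(p) over 𝔽_p, namely ∑_{k=0}^{p−1} C(2k, k) mod p, equals (−3)^{(p−1)/2} mod p, which is ε(p) where ε(p) ∈ {−1, 0, 1} satisfies ε(p) ≡ p (mod 3). -/
/-- For an odd prime `p`, the trace of the Pascal matrix `P(p)` over `𝔽_p`,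
namely `∑_{k<p} C(2k,k) mod p`, equals `(-3)^((p-1)/2)`, which equals `ε(p)`
where `ε(p) ∈ {-1,0,1}` and `ε(p) ≡ p (mod 3)`. -/
theorem trace_pascal_mod_odd_prime (p : ℕ) [Fact p.Prime] (hp : Odd p) :
    (∑ k ∈ Finset.range p, (Nat.choose (2 * k) k : ZMod p)) =
      (-3) ^ ((p - 1) / 2) ∧
    ∀ ε : ℤ, (ε = -1 ∨ ε = 0 ∨ ε = 1) → (ε : ZMod 3) = (p : ZMod 3) →
      (∑ k ∈ Finset.range p, (Nat.choose (2 * k) k : ZMod p)) = ε := by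
  have hpp : p.Prime := Fact.out
  obtain ⟨m, hm⟩ := hp
  have hp2 : 2 ≤ p := hpp.two_le
  have key : ∀ k, k ≤ m → (((2*k).choose k : ℕ) : ZMod p) = (-4)^k * ((m.choose k : ℕ) : ZMod p) := by
    intro k
    induction k with
    | zero => simp
    | succ k ih =>
      intro hk
      have hk' : k < m := hk
      have ihk := ih (le_of_lt hk')
      have h1 : (k+1) * (2*(k+1)).choose (k+1) = 2 * (2*k+1) * ((2*k).choose k) := by
        simpa [Nat.centralBinom, Nat.mul_succ] using Nat.succ_mul_centralBinom_succ k
      have h2 : m.choose (k+1) * (k+1) = m.choose k * (m - k) := Nat.choose_succ_right_eq m k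
      have hc1 : ((k:ZMod p)+1) * (((2*(k+1)).choose (k+1) : ℕ) : ZMod p)
          = 2 * (2*(k:ZMod p)+1) * (((2*k).choose k : ℕ) : ZMod p) := by
        exact_mod_cast congrArg (Nat.cast : ℕ → ZMod p) h1
      have hc2 : ((m.choose (k+1) : ℕ) : ZMod p) * ((k:ZMod p)+1)
          = ((m.choose k : ℕ) : ZMod p) * ((m:ZMod p) - (k:ZMod p)) := by
        have : ((m - k : ℕ) : ZMod p) = (m:ZMod p) - (k:ZMod p) := by
          push_cast [Nat.cast_sub (le_of_lt hk')]; ring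
        rw [← this]
        exact_mod_cast congrArg (Nat.cast : ℕ → ZMod p) h2
      have h0 : 2 * (m : ZMod p) + 1 = 0 := by
        have : ((2*m+1 : ℕ) : ZMod p) = 0 := by rw [← hm]; exact ZMod.natCast_self p
        push_cast at this; linear_combination this
      have hne : ((k:ZMod p)+1) ≠ 0 := by
        have h1lt : k + 1 < p := by omega
        have : (((k+1 : ℕ)) : ZMod p) ≠ 0 := by
          rw [Ne, ZMod.natCast_eq_zero_iff]
          exact fun h => absurd (Nat.le_of_dvd (by omega) h) (by omega)
        push_cast at this; exact this
      have : ((k:ZMod p)+1) * (((2*(k+1)).choose (k+1) : ℕ) : ZMod p)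
          = ((k:ZMod p)+1) * ((-4)^(k+1) * ((m.choose (k+1) : ℕ) : ZMod p)) := by
        linear_combination hc1 + 2*(2*(k:ZMod p)+1)*ihk + ((-4)^(k+1)+8*(-4)^k)*hc2 + 2*(-4)^k*((m.choose k : ℕ) : ZMod p)*h0
      exact mul_left_cancel₀ hne this
  have hsum : (∑ k ∈ Finset.range p, (Nat.choose (2 * k) k : ZMod p)) = (-3)^m := by
    have hsub : Finset.range (m+1) ⊆ Finset.range p := Finset.range_subset_range.mpr (by omega)
    rw [← Finset.sum_subset hsub (fun k hk hk2 => by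
      have hkp : k < p := Finset.mem_range.mp hk
      have hkm : m < k := by
        simp only [Finset.mem_range, not_lt] at hk2; omega
      have hdvd : p ∣ (2*k).choose k := hpp.dvd_choose hkp (by omega) (by omega)
      exact (ZMod.natCast_eq_zero_iff _ _).mpr hdvd)]
    have h4 := add_pow (-4 : ZMod p) 1 m
    norm_num at h4
    refine (Finset.sum_congr rfl fun k hk => key k (Nat.lt_succ_iff.mp (Finset.mem_range.mp hk))).trans h4.symm
  have hm2 : (p - 1) / 2 = m := by omega
  refine ⟨by rw [hsum, hm2], ?_⟩
  intro ε hε hε3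
  rw [hsum]
  have hmod : ε % 3 = (p : ℤ) % 3 := by
    have h' : ((ε:ℤ) : ZMod 3) = (((p:ℕ):ℤ) : ZMod 3) := by push_cast; exact hε3
    exact (ZMod.intCast_eq_intCast_iff _ _ _).mp h'
  by_cases hp3 : p = 3
  · subst hp3
    have hm1 : m = 1 := by omega
    have hε0 : ε = 0 := by omega
    subst hε0; subst hm1
    rw [pow_one, Int.cast_zero, neg_eq_zero]
    exact_mod_cast ZMod.natCast_self 3
  · have hp2' : p ≠ 2 := by omega
    have hnd : ¬ ((3:ℕ) ∣ p) := fun h => hp3 ((Nat.prime_dvd_prime_iff_eq (by norm_num) hpp).mp h).symm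
    have hpz : ((p : ℤ) : ZMod 3) ≠ 0 := by
      rw [Ne, ZMod.intCast_zmod_eq_zero_iff_dvd]
      exact_mod_cast hnd
    have hsq : legendreSym 3 (p : ℤ) ^ 2 = 1 := legendreSym.sq_one 3 hpz
    have hqr : legendreSym 3 (p:ℤ) * legendreSym p 3 = (-1) ^ (p / 2) := by
      have := legendreSym.quadratic_reciprocity hp2' (by norm_num : (3:ℕ) ≠ 2) hp3
      simpa using this
    have hmul : legendreSym p (-3) = legendreSym p (-1) * legendreSym p 3 := by
      rw [← legendreSym.mul]; norm_num
    have hneg1 : legendreSym p (-1) = (-1) ^ (p / 2) := by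
      rw [legendreSym.at_neg_one hp2', ZMod.χ₄_eq_neg_one_pow (by omega : p % 2 = 1)]
    have heq : legendreSym p (-3) = legendreSym 3 (p:ℤ) := by
      have hs : (-1:ℤ)^(p/2) * (-1:ℤ)^(p/2) = 1 := by
        rw [← pow_add, ← two_mul, pow_mul]; norm_num
      have hLne : legendreSym 3 (p:ℤ) ≠ 0 := by
        intro h; rw [h] at hsq; norm_num at hsq
      have hkey : legendreSym 3 (p:ℤ) * legendreSym p (-3) = legendreSym 3 (p:ℤ) * legendreSym 3 (p:ℤ) := by
        linear_combination (legendreSym 3 (p:ℤ))*hmul + (legendreSym 3 (p:ℤ))*(legendreSym p 3)*hneg1 + ((-1:ℤ)^(p/2))*hqr + hs - hsq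
      exact mul_left_cancel₀ hLne hkey
    have hpow : (-3 : ZMod p) ^ m = ((legendreSym p (-3) : ℤ) : ZMod p) := by
      have := legendreSym.eq_pow p (-3)
      rw [this]
      push_cast
      congr 1
      omega
    rw [hpow, heq]
    have hmod3 : legendreSym 3 (p:ℤ) = legendreSym 3 ((p % 3 : ℕ) : ℤ) := by
      rw [legendreSym.mod]
      norm_cast
    have h12 : p % 3 = 1 ∨ p % 3 = 2 := by omega
    rcases h12 with h1 | h1
    · have hL1 : legendreSym 3 (p:ℤ) = 1 := by rw [hmod3, h1]; decide
      rw [hL1]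
      have hε1 : ε = 1 := by omega
      subst hε1; norm_num
    · have hL1 : legendreSym 3 (p:ℤ) = -1 := by rw [hmod3, h1]; decide
      rw [hL1]
      have hε1 : ε = -1 := by omega
      subst hε1; push_cast; norm_num
end

section
/- For any prime p, 0 ≤ k ≤ r, and positive integer r (with r = min over the relevant range), the r×r matrix with entries C(i+j+k, i) for 0 ≤ i, j < r has determinant 1 over ℤ. -/
open Finset

/-- The `r × r` matrix with entries `C(i+j+k, i)` has determinant `1` over `ℤ`. -/
theorem det_shifted_pascal (k r : ℕ) (hr : 1 ≤ r) :
    (Matrix.of fun i j : Fin r => ((Nat.choose (i + j + k) i : ℤ))).det = 1 := by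
  set L : Matrix (Fin r) (Fin r) ℤ :=
    Matrix.of fun i m : Fin r =>
      if (m : ℕ) ≤ (i : ℕ) then ((Nat.choose ((i : ℕ) + k) ((i : ℕ) - (m : ℕ)) : ℤ)) else 0 with hL
  set U : Matrix (Fin r) (Fin r) ℤ :=
    Matrix.of fun m j : Fin r => ((Nat.choose (j : ℕ) (m : ℕ) : ℤ)) with hU
  have hfact : (Matrix.of fun i j : Fin r => ((Nat.choose (i + j + k) i : ℤ))) = L * U := by
    ext i j
    simp only [Matrix.mul_apply, hL, hU, Matrix.of_apply]
    have hv : (Nat.choose ((i : ℕ) + (j : ℕ) + k) (i : ℕ))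
        = ∑ m ∈ Finset.range ((i : ℕ) + 1),
          Nat.choose ((i : ℕ) + k) ((i : ℕ) - m) * Nat.choose (j : ℕ) m := by
      have h1 := Nat.add_choose_eq ((i : ℕ) + k) (j : ℕ) (i : ℕ)
      rw [Finset.Nat.sum_antidiagonal_eq_sum_range_succ
        (fun a b => Nat.choose ((i : ℕ) + k) a * Nat.choose (j : ℕ) b)] at h1
      have harr : (i : ℕ) + k + (j : ℕ) = (i : ℕ) + (j : ℕ) + k := by ring
      rw [harr] at h1
      rw [h1, ← Finset.sum_range_reflect]
      refine Finset.sum_congr rfl fun m hm => ?_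
      simp only [Finset.mem_range] at hm
      have hmi : m ≤ (i : ℕ) := Nat.lt_succ_iff.mp hm
      have e1 : (i : ℕ) + 1 - 1 - m = (i : ℕ) - m := by omega
      have e2 : (i : ℕ) - ((i : ℕ) - m) = m := by omega
      rw [e1, e2]
    have hsplit : ∑ m : Fin r,
        (if (m : ℕ) ≤ (i : ℕ) then ((Nat.choose ((i : ℕ) + k) ((i : ℕ) - (m : ℕ)) : ℤ)) else 0)
          * ((Nat.choose (j : ℕ) (m : ℕ) : ℤ))
        = ∑ m ∈ Finset.range ((i : ℕ) + 1),
          ((Nat.choose ((i : ℕ) + k) ((i : ℕ) - m) : ℤ)) * ((Nat.choose (j : ℕ) m : ℤ)) := by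
      rw [Fin.sum_univ_eq_sum_range (fun m =>
        (if m ≤ (i : ℕ) then ((Nat.choose ((i : ℕ) + k) ((i : ℕ) - m) : ℤ)) else 0)
          * ((Nat.choose (j : ℕ) m : ℤ)))]
      have step1 : ∑ m ∈ Finset.range r,
          (if m ≤ (i : ℕ) then ((Nat.choose ((i : ℕ) + k) ((i : ℕ) - m) : ℤ)) else 0)
            * ((Nat.choose (j : ℕ) m : ℤ))
          = ∑ m ∈ Finset.range ((i : ℕ) + 1),
          (if m ≤ (i : ℕ) then ((Nat.choose ((i : ℕ) + k) ((i : ℕ) - m) : ℤ)) else 0)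
            * ((Nat.choose (j : ℕ) m : ℤ)) := by
        refine (Finset.sum_subset ?_ ?_).symm
        · intro m hm
          simp only [Finset.mem_range] at *
          omega
        · intro m _ hm
          simp only [Finset.mem_range, not_lt] at hm
          have hni : ¬ m ≤ (i : ℕ) := by omega
          simp [hni]
      rw [step1]
      refine Finset.sum_congr rfl fun m hm => ?_
      simp only [Finset.mem_range] at hm
      have hle : m ≤ (i : ℕ) := Nat.lt_succ_iff.mp hm
      simp [hle]
    rw [hsplit, hv]
    push_cast
    ring
  rw [hfact, Matrix.det_mul]
  have hLdet : L.det = 1 := by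
    rw [Matrix.det_of_lowerTriangular L ?_]
    · simp [hL]
    · intro i j hij
      simp only [OrderDual.toDual_lt_toDual] at hij
      have h2 : ¬ ((j : ℕ) ≤ (i : ℕ)) := by
        exact Nat.not_le.mpr (Fin.lt_def.mp hij)
      simp only [hL, Matrix.of_apply, if_neg h2]
  have hUdet : U.det = 1 := by
    rw [Matrix.det_of_upperTriangular ?_]
    · simp [hU]
    · intro i j hij
      simp only [id] at hij
      have : (j : ℕ) < (i : ℕ) := hij
      simp [hU, Nat.choose_eq_zero_of_lt this]
  rw [hLdet, hUdet]; ring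
end
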